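/- arXiv:1605.02031 — 4 statements merged into one kernel-verified Lean document; each statement's English description precedes it below -/
import Mathlib

section
/- Let Ψ(R, R_d) = ½ tr(I − R_dᵀ R) and e_R = ½ (R_dᵀ R − Rᵀ R_d)^∨. Then ‖e_R‖² = Ψ(R, R_d)(2 − Ψ(R, R_d)) for all R, R_d ∈ SO(3). -/
open Matrix
open scoped Matrix

noncomputable section

attribute [local instance] Matrix.normedAddCommGroup Matrix.normedSpace

/-- The hat map `ℝ³ → so(3)`, sending `x` to the skew matrix with `hat x *ᵥ y = x ×₃ y`. -/
def hat (x : Fin 3 → ℝ) : Matrix (Fin 3) (Fin 3) ℝ :=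
  !![0, -x 2, x 1; x 2, 0, -x 0; -x 1, x 0, 0]

/-- The vee map, inverse of the hat map on skew-symmetric matrices. -/
def vee (S : Matrix (Fin 3) (Fin 3) ℝ) : Fin 3 → ℝ := ![S 2 1, S 0 2, S 1 0]

/-- `SO(3)`: rotation matrices. -/
def SO3 : Set (Matrix (Fin 3) (Fin 3) ℝ) := {R | Rᵀ * R = 1 ∧ R.det = 1}

/-- Euclidean inner product on `ℝ³`. -/
def dot (x y : Fin 3 → ℝ) : ℝ := ∑ i, x i * y i

/-- Euclidean norm on `ℝ³`. -/
def norm3 (x : Fin 3 → ℝ) : ℝ := Real.sqrt (dot x x)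

/-- Attitude error function on `SO(3) × SO(3)`. -/
def Psi (R Rd : Matrix (Fin 3) (Fin 3) ℝ) : ℝ := (1/2 : ℝ) * (1 - Rdᵀ * R).trace

/-- Attitude error vector. -/
def eR (R Rd : Matrix (Fin 3) (Fin 3) ℝ) : Fin 3 → ℝ := (1/2 : ℝ) • vee (Rdᵀ * R - Rᵀ * Rd)

/-!
Put `Q = R_dᵀ R ∈ SO(3)` and `t = tr Q`. Then `Ψ = (3 - t) / 2`, so
`Ψ (2 - Ψ) = (3 - t)(1 + t) / 4`, while `e_R = ½ (Q - Qᵀ)^∨`. Since `adj Q = Qᵀ`, every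
diagonal entry `Q i i` equals its complementary `2 × 2` minor; together with the columns of `Q`
being unit vectors this makes `‖(Q - Qᵀ)^∨‖² = (3 - t)(1 + t)` a polynomial identity.
-/

lemma adjugate_eq_transpose_of_orthogonal {n R : Type*} [Fintype n] [DecidableEq n] [CommRing R]
    {Q : Matrix n n R} (hQ : Qᵀ * Q = 1) (hdet : Q.det = 1) : Q.adjugate = Qᵀ := by
  calc Q.adjugate = Qᵀ * Q * Q.adjugate := by rw [hQ, one_mul]
    _ = Qᵀ := by rw [Matrix.mul_assoc, mul_adjugate, hdet, one_smul, mul_one]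

lemma transpose_mul_mem_SO3 {R Rd : Matrix (Fin 3) (Fin 3) ℝ} (hR : R ∈ SO3)
    (hRd : Rd ∈ SO3) : Rdᵀ * R ∈ SO3 := by
  obtain ⟨hR, hRdet⟩ := hR
  obtain ⟨hRd, hRddet⟩ := hRd
  refine ⟨?_, by rw [det_mul, det_transpose, hRdet, hRddet, one_mul]⟩
  rw [transpose_mul, transpose_transpose, Matrix.mul_assoc, ← Matrix.mul_assoc Rd,
    mul_eq_one_comm.mp hRd, Matrix.one_mul, hR]

lemma dot_vee_sub_transpose_of_mem_SO3 {Q : Matrix (Fin 3) (Fin 3) ℝ} (hQ : Q ∈ SO3) :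
    dot (vee (Q - Qᵀ)) (vee (Q - Qᵀ)) = (3 - Q.trace) * (1 + Q.trace) := by
  have hadj := adjugate_eq_transpose_of_orthogonal hQ.1 hQ.2
  have adj (i : Fin 3) : Q.adjugate i i = Q i i := by rw [hadj, transpose_apply]
  have col (i : Fin 3) : (Qᵀ * Q) i i = 1 := by rw [hQ.1, one_apply_eq]
  have a0 := adj 0; have a1 := adj 1; have a2 := adj 2
  have c0 := col 0; have c1 := col 1; have c2 := col 2
  simp only [adjugate_fin_three, of_apply, cons_val', cons_val_zero, cons_val_one,
    cons_val_two, empty_val', cons_val_fin_one, head_cons, head_fin_const, tail_cons] at a0 a1 a2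
  simp only [mul_apply, Fin.sum_univ_three, transpose_apply] at c0 c1 c2
  simp only [dot, vee, trace, diag, Fin.sum_univ_three, Matrix.sub_apply, transpose_apply,
    cons_val_zero, cons_val_one, cons_val_two, head_cons, tail_cons]
  linear_combination c0 + c1 + c2 + 2 * (a0 + a1 + a2)

lemma dot_smul_smul (c : ℝ) (x : Fin 3 → ℝ) : dot (c • x) (c • x) = c ^ 2 * dot x x := by
  simp only [dot, Pi.smul_apply, smul_eq_mul, Finset.mul_sum]
  exact Finset.sum_congr rfl fun i _ => by ring

lemma norm3_sq (x : Fin 3 → ℝ) : norm3 x ^ 2 = dot x x :=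
  Real.sq_sqrt (Finset.sum_nonneg fun i _ => mul_self_nonneg (x i))

lemma eR_eq_smul_vee_sub_transpose (R Rd : Matrix (Fin 3) (Fin 3) ℝ) :
    eR R Rd = (1 / 2 : ℝ) • vee (Rdᵀ * R - (Rdᵀ * R)ᵀ) := by
  rw [eR, transpose_mul, transpose_transpose]

lemma Psi_eq_three_sub_trace (R Rd : Matrix (Fin 3) (Fin 3) ℝ) :
    Psi R Rd = (3 - (Rdᵀ * R).trace) / 2 := by
  rw [Psi, trace_sub, trace_one, Fintype.card_fin]
  ring

/-- `‖e_R‖² = Ψ(R,R_d)(2 − Ψ(R,R_d))`. -/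
theorem eR_norm_sq (R Rd : Matrix (Fin 3) (Fin 3) ℝ) (hR : R ∈ SO3) (hRd : Rd ∈ SO3) :
    norm3 (eR R Rd) ^ 2 = Psi R Rd * (2 - Psi R Rd) := by
  rw [norm3_sq, eR_eq_smul_vee_sub_transpose, dot_smul_smul,
    dot_vee_sub_transpose_of_mem_SO3 (transpose_mul_mem_SO3 hR hRd),
    Psi_eq_three_sub_trace]
  ring
end
end

section
/- If Ψ(R, R_d) < 1, then ½ ‖e_R‖² ≤ Ψ(R, R_d) ≤ (1/(2 − Ψ(R,R_d))) ‖e_R‖², and in particular Ψ(R, R_d) ≤ ‖e_R‖²/(2 − ψ₁) whenever Ψ(R, R_d) ≤ ψ₁ < 1. -/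
open Matrix
open scoped Matrix

noncomputable section

attribute [local instance] Matrix.normedAddCommGroup Matrix.normedSpace

lemma so3_key (Q : Matrix (Fin 3) (Fin 3) ℝ) (hQ : Qᵀ * Q = 1) (hd : Q.det = 1) :
    (Q 2 1 - Q 1 2)^2 + (Q 0 2 - Q 2 0)^2 + (Q 1 0 - Q 0 1)^2
      = 3 + 2*(Q 0 0 + Q 1 1 + Q 2 2) - (Q 0 0 + Q 1 1 + Q 2 2)^2 := by
  have hadj : Q * Q.adjugate = 1 := by rw [Matrix.mul_adjugate, hd, one_smul]
  have hT : Qᵀ = Q.adjugate := by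
    calc Qᵀ = Qᵀ * (Q * Q.adjugate) := by rw [hadj, Matrix.mul_one]
    _ = (Qᵀ * Q) * Q.adjugate := by rw [Matrix.mul_assoc]
    _ = Q.adjugate := by rw [hQ, Matrix.one_mul]
  rw [Matrix.adjugate_fin_three] at hT
  have f0 : Q 0 0 = Q 1 1 * Q 2 2 - Q 1 2 * Q 2 1 := by
    have := congrFun (congrFun hT 0) 0; simpa [Matrix.transpose_apply] using this
  have f1 : Q 1 1 = Q 0 0 * Q 2 2 - Q 0 2 * Q 2 0 := by
    have := congrFun (congrFun hT 1) 1; simpa [Matrix.transpose_apply] using this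
  have f2 : Q 2 2 = Q 0 0 * Q 1 1 - Q 0 1 * Q 1 0 := by
    have := congrFun (congrFun hT 2) 2; simpa [Matrix.transpose_apply] using this
  have c0 : Q 0 0 * Q 0 0 + Q 1 0 * Q 1 0 + Q 2 0 * Q 2 0 = 1 := by
    have := congrFun (congrFun hQ 0) 0
    simpa [Matrix.mul_apply, Fin.sum_univ_three, Matrix.one_apply] using this
  have c1 : Q 0 1 * Q 0 1 + Q 1 1 * Q 1 1 + Q 2 1 * Q 2 1 = 1 := by
    have := congrFun (congrFun hQ 1) 1
    simpa [Matrix.mul_apply, Fin.sum_univ_three, Matrix.one_apply] using this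
  have c2 : Q 0 2 * Q 0 2 + Q 1 2 * Q 1 2 + Q 2 2 * Q 2 2 = 1 := by
    have := congrFun (congrFun hQ 2) 2
    simpa [Matrix.mul_apply, Fin.sum_univ_three, Matrix.one_apply] using this
  linear_combination c0 + c1 + c2 - 2*f0 - 2*f1 - 2*f2


/-- if `Ψ < 1` then `½‖e_R‖² ≤ Ψ ≤ ‖e_R‖²/(2−Ψ)`, and
`Ψ ≤ ‖e_R‖²/(2−ψ₁)` whenever `Ψ ≤ ψ₁ < 1`. -/
theorem psi_eR_bounds (R Rd : Matrix (Fin 3) (Fin 3) ℝ) (hR : R ∈ SO3) (hRd : Rd ∈ SO3)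
    (h : Psi R Rd < 1) :
    (1/2 : ℝ) * norm3 (eR R Rd) ^ 2 ≤ Psi R Rd ∧
    Psi R Rd ≤ (1 / (2 - Psi R Rd)) * norm3 (eR R Rd) ^ 2 ∧
    ∀ ψ₁ : ℝ, 0 < ψ₁ → ψ₁ < 1 → Psi R Rd ≤ ψ₁ →
      Psi R Rd ≤ norm3 (eR R Rd) ^ 2 / (2 - ψ₁) := by
  set Q := Rdᵀ * R with hQdef
  have hRdRdT : Rd * Rdᵀ = 1 := mul_eq_one_comm.mp hRd.1
  have hQ : Qᵀ * Q = 1 := by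
    rw [hQdef, Matrix.transpose_mul, Matrix.transpose_transpose, Matrix.mul_assoc,
      ← Matrix.mul_assoc Rd, hRdRdT, Matrix.one_mul, hR.1]
  have hd : Q.det = 1 := by
    rw [hQdef, Matrix.det_mul, Matrix.det_transpose, hRd.2, hR.2, one_mul]
  have key := so3_key Q hQ hd
  have hRTRd : Rᵀ * Rd = Qᵀ := by
    rw [hQdef, Matrix.transpose_mul, Matrix.transpose_transpose]
  have hPsi : Psi R Rd = (1/2 : ℝ) * (3 - (Q 0 0 + Q 1 1 + Q 2 2)) := by
    rw [Psi, ← hQdef, Matrix.trace_sub, Matrix.trace_one, Matrix.trace_fin_three]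
    norm_num
  have hdotnn : 0 ≤ dot (eR R Rd) (eR R Rd) := by
    rw [dot]
    exact Finset.sum_nonneg fun i _ => mul_self_nonneg _
  have hn2 : norm3 (eR R Rd) ^ 2 = dot (eR R Rd) (eR R Rd) := by
    rw [norm3, Real.sq_sqrt hdotnn]
  have hdot : dot (eR R Rd) (eR R Rd)
      = (1/4 : ℝ) * ((Q 2 1 - Q 1 2)^2 + (Q 0 2 - Q 2 0)^2 + (Q 1 0 - Q 0 1)^2) := by
    rw [dot, eR, ← hQdef, hRTRd, vee, Fin.sum_univ_three]
    simp [Matrix.sub_apply, Matrix.transpose_apply]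
    ring
  set p := Psi R Rd with hpdef
  have hkey : norm3 (eR R Rd) ^ 2 = p * (2 - p) := by
    rw [hn2, hdot, key, hPsi]; ring
  have hnn : 0 ≤ norm3 (eR R Rd) ^ 2 := sq_nonneg _
  have hp0 : 0 ≤ p := by nlinarith
  refine ⟨by nlinarith, ?_, ?_⟩
  · have h2p : (0:ℝ) < 2 - p := by linarith
    rw [hkey]
    have : 1 / (2 - p) * (p * (2 - p)) = p := by field_simp
    rw [this]
  · intro ψ₁ hψ0 hψ1 hpψ
    have hψ2 : (0:ℝ) < 2 - ψ₁ := by linarith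
    rw [hkey, le_div_iff₀ hψ2]
    nlinarith
end
end

section
/- Let R : ℝ → SO(3) satisfy Ṙ = R Ω̂ for a curve Ω : ℝ → ℝ³, and let R_d : ℝ → SO(3) satisfy Ṙ_d = R_d Ω̂_d. Define e_Ω = Ω − Rᵀ R_d Ω_d and e_R = ½(R_dᵀ R − Rᵀ R_d)^∨. Then the time derivative of Ψ(R, R_d) = ½ tr(I − R_dᵀ R) satisfies d/dt Ψ(R, R_d) = e_R · e_Ω. -/
open Matrix
open scoped Matrix

noncomputable section

attribute [local instance] Matrix.normedAddCommGroup Matrix.normedSpace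

/-!
Writing `Q = R_dᵀ R`, the derivative of `Ψ` is `-½ tr(d/dt (R_dᵀ R)) = ½ tr(Ω̂_d Q) - ½ tr(Q Ω̂)`,
because `Ω̂_d` is skew. The identity `tr(A x̂) = -(A - Aᵀ)^∨ · x` turns this into
`e_R · Ω - e_R · Ω_d`. Finally `Q ∈ SO(3)` equals its own cofactor matrix, which forces
`Q e_R = e_R` (`e_R` lies on the rotation axis of `Q`), so `e_R · Ω_d = e_R · (Qᵀ Ω_d)`.
-/

section MatrixDeriv

variable {𝕜 : Type*} [NontriviallyNormedField 𝕜] {l m n : Type*} [Fintype m] [Fintype n]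
  {t : 𝕜}

theorem HasDerivAt.matrix_transpose {A : 𝕜 → Matrix m n 𝕜} {A' : Matrix m n 𝕜}
    (hA : HasDerivAt A A' t) : HasDerivAt (fun s => (A s)ᵀ) A'ᵀ t :=
  hasDerivAt_pi.mpr fun i => hasDerivAt_pi.mpr fun j =>
    hasDerivAt_pi.mp (hasDerivAt_pi.mp hA j) i

theorem HasDerivAt.matrix_mul {A : 𝕜 → Matrix l m 𝕜} {B : 𝕜 → Matrix m n 𝕜}
    {A' : Matrix l m 𝕜} {B' : Matrix m n 𝕜} (hA : HasDerivAt A A' t) (hB : HasDerivAt B B' t) :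
    HasDerivAt (fun s => A s * B s) (A' * B t + A t * B') t := by
  refine hasDerivAt_pi.mpr fun i => hasDerivAt_pi.mpr fun j => ?_
  simp only [Matrix.add_apply, Matrix.mul_apply, ← Finset.sum_add_distrib]
  exact HasDerivAt.fun_sum fun k _ =>
    (hasDerivAt_pi.mp (hasDerivAt_pi.mp hA i) k).mul (hasDerivAt_pi.mp (hasDerivAt_pi.mp hB k) j)

theorem HasDerivAt.matrix_trace {A : 𝕜 → Matrix n n 𝕜} {A' : Matrix n n 𝕜}
    (hA : HasDerivAt A A' t) : HasDerivAt (fun s => (A s).trace) A'.trace t :=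
  HasDerivAt.fun_sum fun i _ => hasDerivAt_pi.mp (hasDerivAt_pi.mp hA i) i

end MatrixDeriv

theorem hasDerivAt_Psi {R Rd : ℝ → Matrix (Fin 3) (Fin 3) ℝ} {R' Rd' : Matrix (Fin 3) (Fin 3) ℝ}
    {t : ℝ} (hR : HasDerivAt R R' t) (hRd : HasDerivAt Rd Rd' t) :
    HasDerivAt (fun s => Psi (R s) (Rd s)) (-(1 / 2) * (Rd'ᵀ * R t + (Rd t)ᵀ * R').trace) t := by
  have h := (((hasDerivAt_const t 1).sub (hRd.matrix_transpose.matrix_mul hR)).matrix_trace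
    ).const_mul (1 / 2 : ℝ)
  simpa only [Psi, Pi.sub_apply, zero_sub, trace_neg, mul_neg, neg_mul] using h

theorem hat_transpose (x : Fin 3 → ℝ) : (hat x)ᵀ = -hat x := by
  ext i j
  fin_cases i <;> fin_cases j <;> simp [hat]

theorem trace_mul_hat (A : Matrix (Fin 3) (Fin 3) ℝ) (x : Fin 3 → ℝ) :
    (A * hat x).trace = -(vee (A - Aᵀ) ⬝ᵥ x) := by
  simp only [trace, diag, mul_apply, hat, vee, dotProduct, Fin.sum_univ_three, Matrix.sub_apply,
    transpose_apply, of_apply, cons_val', cons_val_zero, cons_val_one, cons_val_two,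
    empty_val', cons_val_fin_one, head_cons, tail_cons, head_fin_const]
  ring

theorem adjugate_eq_transpose_of_mem_SO3 {R : Matrix (Fin 3) (Fin 3) ℝ} (hR : R ∈ SO3) :
    adjugate R = Rᵀ :=
  calc adjugate R = Rᵀ * R * adjugate R := by rw [hR.1, Matrix.one_mul]
    _ = Rᵀ := by rw [Matrix.mul_assoc, mul_adjugate, hR.2, one_smul, Matrix.mul_one]

theorem mulVec_vee_sub_transpose {Q : Matrix (Fin 3) (Fin 3) ℝ} (hQ : adjugate Q = Qᵀ) :
    Q *ᵥ vee (Q - Qᵀ) = vee (Q - Qᵀ) := by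
  have cof : ∀ i j, adjugate Q i j = Q j i := fun i j => by rw [hQ, transpose_apply]
  have h01 := cof 0 1
  have h10 := cof 1 0
  have h02 := cof 0 2
  have h20 := cof 2 0
  have h12 := cof 1 2
  have h21 := cof 2 1
  simp only [adjugate_fin_three, of_apply, cons_val', cons_val_zero, cons_val_one, cons_val_two,
    empty_val', cons_val_fin_one, head_cons, tail_cons, head_fin_const] at h01 h10 h02 h20 h12 h21
  ext i
  fin_cases i <;>
    simp only [mulVec, dotProduct, vee, Fin.sum_univ_three, Matrix.sub_apply, transpose_apply,
      cons_val_zero, cons_val_one, cons_val_two, head_cons, tail_cons, Fin.zero_eta, Fin.mk_one,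
      Fin.reduceFinMk]
  · linear_combination h12 - h21
  · linear_combination h20 - h02
  · linear_combination h01 - h10

theorem dot_eR_sub_mulVec {R Rd : Matrix (Fin 3) (Fin 3) ℝ} (hR : R ∈ SO3) (hRd : Rd ∈ SO3)
    (ω ωd : Fin 3 → ℝ) :
    dot (eR R Rd) (ω - (Rᵀ * Rd) *ᵥ ωd)
      = -(1 / 2) * ((Rd * hat ωd)ᵀ * R + Rdᵀ * (R * hat ω)).trace := by
  have hQt : Rᵀ * Rd = (Rdᵀ * R)ᵀ := by rw [transpose_mul, transpose_transpose]
  have hadj : adjugate (Rdᵀ * R) = (Rdᵀ * R)ᵀ := by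
    rw [adjugate_mul_distrib, ← adjugate_transpose, adjugate_eq_transpose_of_mem_SO3 hR,
      adjugate_eq_transpose_of_mem_SO3 hRd, transpose_transpose, ← hQt]
  have hfix : (Rdᵀ * R) *ᵥ eR R Rd = eR R Rd := by
    rw [eR, hQt, mulVec_smul, mulVec_vee_sub_transpose hadj]
  have hdot : eR R Rd ⬝ᵥ ((Rᵀ * Rd) *ᵥ ωd) = eR R Rd ⬝ᵥ ωd := by
    rw [hQt, dotProduct_mulVec, vecMul_transpose, hfix]
  have htr : ((Rd * hat ωd)ᵀ * R + Rdᵀ * (R * hat ω)).trace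
      = -(Rdᵀ * R * hat ωd).trace + (Rdᵀ * R * hat ω).trace := by
    rw [transpose_mul, hat_transpose, Matrix.neg_mul, Matrix.neg_mul, trace_add, trace_neg,
      Matrix.mul_assoc, trace_mul_comm (hat ωd), Matrix.mul_assoc Rdᵀ R (hat ω)]
  change eR R Rd ⬝ᵥ _ = _
  rw [dotProduct_sub, hdot, htr, trace_mul_hat, trace_mul_hat, eR, hQt, smul_dotProduct,
    smul_dotProduct, smul_eq_mul, smul_eq_mul]
  ring

/-- `d/dt Ψ(R,R_d) = e_R · e_Ω` along the attitude kinematics. -/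
theorem psi_deriv (R Rd : ℝ → Matrix (Fin 3) (Fin 3) ℝ) (Ω Ωd : ℝ → Fin 3 → ℝ) (t : ℝ)
    (hR : ∀ s, R s ∈ SO3) (hRd : ∀ s, Rd s ∈ SO3)
    (hdR : ∀ s, HasDerivAt R (R s * hat (Ω s)) s)
    (hdRd : ∀ s, HasDerivAt Rd (Rd s * hat (Ωd s)) s) :
    HasDerivAt (fun s => Psi (R s) (Rd s))
      (dot (eR (R t) (Rd t)) (Ω t - ((R t)ᵀ * Rd t) *ᵥ Ωd t)) t := by
  rw [dot_eR_sub_mulVec (hR t) (hRd t)]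
  exact hasDerivAt_Psi (hdR t) (hdRd t)
end
end

section
/- For any R, R_d ∈ SO(3) and any v ∈ ℝ³, the matrix E(R, R_d) = ½ (tr(Rᵀ R_d) I − Rᵀ R_d) satisfies ‖E(R, R_d) v‖ ≤ ‖v‖, i.e., ‖E(R,R_d)‖ ≤ 1 in operator norm. -/
open Matrix
open scoped Matrix

noncomputable section

attribute [local instance] Matrix.normedAddCommGroup Matrix.normedSpace

private lemma cs_aux (x0 x1 x2 y0 y1 y2 : ℝ)
    (h : y0^2+y1^2+y2^2 = x0^2+x1^2+x2^2) :
    x0*y0+x1*y1+x2*y2 ≤ x0^2+x1^2+x2^2 ∧ -(x0^2+x1^2+x2^2) ≤ x0*y0+x1*y1+x2*y2 :=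
  ⟨by nlinarith [sq_nonneg (x0-y0), sq_nonneg (x1-y1), sq_nonneg (x2-y2)],
   by nlinarith [sq_nonneg (x0+y0), sq_nonneg (x1+y1), sq_nonneg (x2+y2)]⟩

private lemma tr_aux (t A : ℝ) (h : (1+t)*(3-t) = A) (hA : 0 ≤ A) : -1 ≤ t ∧ t ≤ 3 :=
  ⟨by nlinarith, by nlinarith⟩

private lemma G_aux (t s p : ℝ) (hs : 0 ≤ s) (hpu : p ≤ s)
    (h1 : 0 ≤ (1+t)*(2*p-(t-1)*s)) (ht1 : -1 ≤ t) (ht3 : t ≤ 3) :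
    0 ≤ (3-t^2)*s + 2*t*p := by
  rcases le_or_gt 0 t with ht | ht
  · nlinarith [mul_nonneg ht h1,
      mul_nonneg (mul_nonneg (by linarith : (0:ℝ) ≤ 1+t) (by linarith : (0:ℝ) ≤ 3-t)) hs]
  · nlinarith [mul_nonneg (mul_nonneg (by linarith : (0:ℝ) ≤ 1+t)
        (by linarith : (0:ℝ) ≤ 3-t)) hs,
      mul_nonneg (by linarith : (0:ℝ) ≤ -t) (by linarith : (0:ℝ) ≤ s - p)]

private lemma fin_aux (t s p n L : ℝ) (hn : n = s) (hG : 0 ≤ (3-t^2)*s + 2*t*p)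
    (hL : L = t^2*s - 2*t*p + n) (hs : 0 ≤ s) : L ≤ 4*s := by
  rw [hL, hn]; linarith

lemma so3_key_s8 (a00 a01 a02 a10 a11 a12 a20 a21 a22 v0 v1 v2 : ℝ)
    (hr00 : a00*a00 + a01*a01 + a02*a02 = 1)
    (hr01 : a00*a10 + a01*a11 + a02*a12 = 0)
    (hr02 : a00*a20 + a01*a21 + a02*a22 = 0)
    (hr11 : a10*a10 + a11*a11 + a12*a12 = 1)
    (hr12 : a10*a20 + a11*a21 + a12*a22 = 0)
    (hr22 : a20*a20 + a21*a21 + a22*a22 = 1)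
    (hc00 : a00*a00 + a10*a10 + a20*a20 = 1)
    (hc01 : a00*a01 + a10*a11 + a20*a21 = 0)
    (hc02 : a00*a02 + a10*a12 + a20*a22 = 0)
    (hc11 : a01*a01 + a11*a11 + a21*a21 = 1)
    (hc12 : a01*a02 + a11*a12 + a21*a22 = 0)
    (hc22 : a02*a02 + a12*a12 + a22*a22 = 1)
    (hf00 : a00 = a11*a22 - a12*a21)
    (hf01 : a01 = a12*a20 - a10*a22)
    (hf02 : a02 = a10*a21 - a11*a20)
    (hf10 : a10 = a02*a21 - a01*a22)
    (hf11 : a11 = a00*a22 - a02*a20)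
    (hf12 : a12 = a01*a20 - a00*a21)
    (hf20 : a20 = a01*a12 - a02*a11)
    (hf21 : a21 = a02*a10 - a00*a12)
    (hf22 : a22 = a00*a11 - a01*a10) :
    ((a00+a11+a22)*v0 - (a00*v0+a01*v1+a02*v2))^2
      + ((a00+a11+a22)*v1 - (a10*v0+a11*v1+a12*v2))^2
      + ((a00+a11+a22)*v2 - (a20*v0+a21*v1+a22*v2))^2
      ≤ 4*(v0^2+v1^2+v2^2) := by
  have hs : (0:ℝ) ≤ v0^2+v1^2+v2^2 := by positivity
  have hQv : (a00*v0+a01*v1+a02*v2)^2 + (a10*v0+a11*v1+a12*v2)^2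
      + (a20*v0+a21*v1+a22*v2)^2 = v0^2+v1^2+v2^2 := by
    linear_combination v0^2*hc00 + v1^2*hc11 + v2^2*hc22 + 2*v0*v1*hc01
      + 2*v0*v2*hc02 + 2*v1*v2*hc12
  obtain ⟨hpu, hpl⟩ := cs_aux v0 v1 v2 (a00*v0+a01*v1+a02*v2) (a10*v0+a11*v1+a12*v2)
    (a20*v0+a21*v1+a22*v2) hQv
  have hT : (1+(a00+a11+a22))*(3-(a00+a11+a22))
      = (a21-a12)^2 + (a02-a20)^2 + (a10-a01)^2 := by
    linear_combination 2*hf00 + 2*hf11 + 2*hf22 - hr00 - hr11 - hr22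
  obtain ⟨ht1, ht3⟩ := tr_aux _ _ hT (by positivity)
  have hF3 : (1+(a00+a11+a22)) *
      (2*(v0*(a00*v0+a01*v1+a02*v2) + v1*(a10*v0+a11*v1+a12*v2) + v2*(a20*v0+a21*v1+a22*v2))
        - ((a00+a11+a22)-1)*(v0^2+v1^2+v2^2))
      = ((a21-a12)*v0 + (a02-a20)*v1 + (a10-a01)*v2)^2 := by
    linear_combination (v0^2 - (v0^2+v1^2+v2^2))*hr00 + (v1^2 - (v0^2+v1^2+v2^2))*hr11
      + (v2^2 - (v0^2+v1^2+v2^2))*hr22 + 2*v0*v1*hr01 + 2*v0*v2*hr02 + 2*v1*v2*hr12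
      + v0^2*hc00 + v1^2*hc11 + v2^2*hc22 + 2*v0*v1*hc01 + 2*v0*v2*hc02 + 2*v1*v2*hc12
      + 2*v0^2*hf00 + 2*v1^2*hf11 + 2*v2^2*hf22 + 2*v0*v1*(hf01+hf10)
      + 2*v0*v2*(hf02+hf20) + 2*v1*v2*(hf12+hf21)
  have hF3' : (0:ℝ) ≤ (1+(a00+a11+a22)) *
      (2*(v0*(a00*v0+a01*v1+a02*v2) + v1*(a10*v0+a11*v1+a12*v2) + v2*(a20*v0+a21*v1+a22*v2))
        - ((a00+a11+a22)-1)*(v0^2+v1^2+v2^2)) := by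
    rw [hF3]; positivity
  have hG := G_aux (a00+a11+a22) (v0^2+v1^2+v2^2)
    (v0*(a00*v0+a01*v1+a02*v2) + v1*(a10*v0+a11*v1+a12*v2) + v2*(a20*v0+a21*v1+a22*v2))
    hs hpu hF3' ht1 ht3
  exact fin_aux (a00+a11+a22) (v0^2+v1^2+v2^2)
    (v0*(a00*v0+a01*v1+a02*v2) + v1*(a10*v0+a11*v1+a12*v2) + v2*(a20*v0+a21*v1+a22*v2))
    ((a00*v0+a01*v1+a02*v2)^2 + (a10*v0+a11*v1+a12*v2)^2 + (a20*v0+a21*v1+a22*v2)^2)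
    _ hQv hG (by ring) hs

set_option maxHeartbeats 1600000 in
/-- `‖½(tr(RᵀR_d) I − RᵀR_d) v‖ ≤ ‖v‖`, i.e. operator norm at most 1. -/
theorem E_opnorm_le_one (R Rd : Matrix (Fin 3) (Fin 3) ℝ) (hR : R ∈ SO3) (hRd : Rd ∈ SO3)
    (v : Fin 3 → ℝ) :
    norm3 (((1/2 : ℝ) • ((Rᵀ * Rd).trace • (1 : Matrix (Fin 3) (Fin 3) ℝ) - Rᵀ * Rd)) *ᵥ v)
      ≤ norm3 v := by
  obtain ⟨hR1, hR2⟩ := hR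
  obtain ⟨hRd1, hRd2⟩ := hRd
  set Q : Matrix (Fin 3) (Fin 3) ℝ := Rᵀ * Rd with hQdef
  have hRR : R * Rᵀ = 1 := mul_eq_one_comm.mp hR1
  have hQ1 : Qᵀ * Q = 1 := by
    rw [hQdef, Matrix.transpose_mul, Matrix.transpose_transpose, Matrix.mul_assoc,
      ← Matrix.mul_assoc R, hRR, Matrix.one_mul, hRd1]
  have hQ2 : Q * Qᵀ = 1 := mul_eq_one_comm.mp hQ1
  have hdet : Q.det = 1 := by
    rw [hQdef, Matrix.det_mul, Matrix.det_transpose, hR2, hRd2, one_mul]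
  have hadj : Qᵀ = Q.adjugate := by
    calc Qᵀ = Qᵀ * (Q * Q.adjugate) := by
          rw [Matrix.mul_adjugate, hdet, one_smul, Matrix.mul_one]
      _ = (Qᵀ * Q) * Q.adjugate := (Matrix.mul_assoc _ _ _).symm
      _ = Q.adjugate := by rw [hQ1, Matrix.one_mul]
  have hr00 : Q 0 0 * Q 0 0 + Q 0 1 * Q 0 1 + Q 0 2 * Q 0 2 = 1 := by
    have h := congrFun (congrFun hQ2 0) 0
    simp [Matrix.mul_apply, Fin.sum_univ_three, Matrix.one_apply, Matrix.transpose_apply] at h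
    linear_combination h
  have hr01 : Q 0 0 * Q 1 0 + Q 0 1 * Q 1 1 + Q 0 2 * Q 1 2 = 0 := by
    have h := congrFun (congrFun hQ2 0) 1
    simp [Matrix.mul_apply, Fin.sum_univ_three, Matrix.one_apply, Matrix.transpose_apply] at h
    linear_combination h
  have hr02 : Q 0 0 * Q 2 0 + Q 0 1 * Q 2 1 + Q 0 2 * Q 2 2 = 0 := by
    have h := congrFun (congrFun hQ2 0) 2
    simp [Matrix.mul_apply, Fin.sum_univ_three, Matrix.one_apply, Matrix.transpose_apply] at h
    linear_combination h
  have hr11 : Q 1 0 * Q 1 0 + Q 1 1 * Q 1 1 + Q 1 2 * Q 1 2 = 1 := by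
    have h := congrFun (congrFun hQ2 1) 1
    simp [Matrix.mul_apply, Fin.sum_univ_three, Matrix.one_apply, Matrix.transpose_apply] at h
    linear_combination h
  have hr12 : Q 1 0 * Q 2 0 + Q 1 1 * Q 2 1 + Q 1 2 * Q 2 2 = 0 := by
    have h := congrFun (congrFun hQ2 1) 2
    simp [Matrix.mul_apply, Fin.sum_univ_three, Matrix.one_apply, Matrix.transpose_apply] at h
    linear_combination h
  have hr22 : Q 2 0 * Q 2 0 + Q 2 1 * Q 2 1 + Q 2 2 * Q 2 2 = 1 := by
    have h := congrFun (congrFun hQ2 2) 2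
    simp [Matrix.mul_apply, Fin.sum_univ_three, Matrix.one_apply, Matrix.transpose_apply] at h
    linear_combination h
  have hc00 : Q 0 0 * Q 0 0 + Q 1 0 * Q 1 0 + Q 2 0 * Q 2 0 = 1 := by
    have h := congrFun (congrFun hQ1 0) 0
    simp [Matrix.mul_apply, Fin.sum_univ_three, Matrix.one_apply, Matrix.transpose_apply] at h
    linear_combination h
  have hc01 : Q 0 0 * Q 0 1 + Q 1 0 * Q 1 1 + Q 2 0 * Q 2 1 = 0 := by
    have h := congrFun (congrFun hQ1 0) 1
    simp [Matrix.mul_apply, Fin.sum_univ_three, Matrix.one_apply, Matrix.transpose_apply] at h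
    linear_combination h
  have hc02 : Q 0 0 * Q 0 2 + Q 1 0 * Q 1 2 + Q 2 0 * Q 2 2 = 0 := by
    have h := congrFun (congrFun hQ1 0) 2
    simp [Matrix.mul_apply, Fin.sum_univ_three, Matrix.one_apply, Matrix.transpose_apply] at h
    linear_combination h
  have hc11 : Q 0 1 * Q 0 1 + Q 1 1 * Q 1 1 + Q 2 1 * Q 2 1 = 1 := by
    have h := congrFun (congrFun hQ1 1) 1
    simp [Matrix.mul_apply, Fin.sum_univ_three, Matrix.one_apply, Matrix.transpose_apply] at h
    linear_combination h
  have hc12 : Q 0 1 * Q 0 2 + Q 1 1 * Q 1 2 + Q 2 1 * Q 2 2 = 0 := by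
    have h := congrFun (congrFun hQ1 1) 2
    simp [Matrix.mul_apply, Fin.sum_univ_three, Matrix.one_apply, Matrix.transpose_apply] at h
    linear_combination h
  have hc22 : Q 0 2 * Q 0 2 + Q 1 2 * Q 1 2 + Q 2 2 * Q 2 2 = 1 := by
    have h := congrFun (congrFun hQ1 2) 2
    simp [Matrix.mul_apply, Fin.sum_univ_three, Matrix.one_apply, Matrix.transpose_apply] at h
    linear_combination h
  have hf00 : Q 0 0 = Q 1 1 * Q 2 2 - Q 1 2 * Q 2 1 := by
    have h := congrFun (congrFun hadj 0) 0
    simp [Matrix.adjugate_fin_three, Matrix.transpose_apply] at h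
    linear_combination h
  have hf01 : Q 0 1 = Q 1 2 * Q 2 0 - Q 1 0 * Q 2 2 := by
    have h := congrFun (congrFun hadj 1) 0
    simp [Matrix.adjugate_fin_three, Matrix.transpose_apply] at h
    linear_combination h
  have hf02 : Q 0 2 = Q 1 0 * Q 2 1 - Q 1 1 * Q 2 0 := by
    have h := congrFun (congrFun hadj 2) 0
    simp [Matrix.adjugate_fin_three, Matrix.transpose_apply] at h
    linear_combination h
  have hf10 : Q 1 0 = Q 0 2 * Q 2 1 - Q 0 1 * Q 2 2 := by
    have h := congrFun (congrFun hadj 0) 1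
    simp [Matrix.adjugate_fin_three, Matrix.transpose_apply] at h
    linear_combination h
  have hf11 : Q 1 1 = Q 0 0 * Q 2 2 - Q 0 2 * Q 2 0 := by
    have h := congrFun (congrFun hadj 1) 1
    simp [Matrix.adjugate_fin_three, Matrix.transpose_apply] at h
    linear_combination h
  have hf12 : Q 1 2 = Q 0 1 * Q 2 0 - Q 0 0 * Q 2 1 := by
    have h := congrFun (congrFun hadj 2) 1
    simp [Matrix.adjugate_fin_three, Matrix.transpose_apply] at h
    linear_combination h
  have hf20 : Q 2 0 = Q 0 1 * Q 1 2 - Q 0 2 * Q 1 1 := by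
    have h := congrFun (congrFun hadj 0) 2
    simp [Matrix.adjugate_fin_three, Matrix.transpose_apply] at h
    linear_combination h
  have hf21 : Q 2 1 = Q 0 2 * Q 1 0 - Q 0 0 * Q 1 2 := by
    have h := congrFun (congrFun hadj 1) 2
    simp [Matrix.adjugate_fin_three, Matrix.transpose_apply] at h
    linear_combination h
  have hf22 : Q 2 2 = Q 0 0 * Q 1 1 - Q 0 1 * Q 1 0 := by
    have h := congrFun (congrFun hadj 2) 2
    simp [Matrix.adjugate_fin_three, Matrix.transpose_apply] at h
    linear_combination h

  have key := so3_key_s8 (Q 0 0) (Q 0 1) (Q 0 2) (Q 1 0) (Q 1 1) (Q 1 2) (Q 2 0) (Q 2 1) (Q 2 2)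
    (v 0) (v 1) (v 2) hr00 hr01 hr02 hr11 hr12 hr22 hc00 hc01 hc02 hc11 hc12 hc22
    hf00 hf01 hf02 hf10 hf11 hf12 hf20 hf21 hf22
  rw [norm3, norm3]
  apply Real.sqrt_le_sqrt
  simp only [dot, Matrix.mulVec, dotProduct, Fin.sum_univ_three, Matrix.smul_apply,
    Matrix.sub_apply, smul_eq_mul, Matrix.one_apply, Matrix.trace_fin_three,
    Fin.isValue, ↓reduceIte, one_ne_zero, Fin.reduceEq, mul_zero, mul_one, zero_ne_one]
  linarith [key]
end
end
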